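/- arXiv:2102.00102 — 3 statements merged into one kernel-verified Lean document; each statement's English description precedes it below -/
import Mathlib

section
/- Let $\bar{Q}, \bar{Q}_0 : \mathcal{A} \times \mathcal{C} \to [0,1]$ be conditional mean functions, $g, g^*$ conditional densities of $A$ given $C$ with $g \ge \delta > 0$, and define $D^*(\bar{Q}, g)(c, a, y) = \frac{g^*(a \mid c)}{g(a \mid c)}(y - \bar{Q}(a, c))$ and $\Psi_c(\bar{Q}) = \sum_a g^*(a \mid c)\bar{Q}(a, c)$. If $Y$ is drawn with conditional mean $\bar{Q}_0(A, c)$ given $(A, c)$ where $A \sim g(\cdot \mid c)$, then $\Psi_c(\bar{Q}) - \Psi_c(\bar{Q}_0) = -E[D^*(\bar{Q}, g)(c, A, Y)] + R(\bar{Q}, \bar{Q}_0, g, g_0)$ where $R(\bar{Q}, \bar{Q}_0, g, g_0) = \sum_a g^*(a \mid c)\left(1 - \frac{g_0(a \mid c)}{g(a \mid c)}\right)(\bar{Q} - \bar{Q}_0)(a, c)$, and $R = 0$ whenever $\bar{Q} = \bar{Q}_0$ or $g = g_0$. -/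
/-!
On each fiber `{A = a}` the weight `g*(a∣c)/g(a∣c)` and the fitted value `Q̄(a,c)` are constants,
so the integral of the weighted residual splits into finitely many fiber integrals, which the
marginal and conditional-mean hypotheses evaluate to `g*(a∣c) g₀(a∣c)/g(a∣c) (Q̄₀ - Q̄)(a,c)`.
The expansion is then a termwise ring identity.
-/

open MeasureTheory

section FiniteTreatment

variable {α Ω : Type*} [Fintype α] [MeasurableSpace α] [MeasurableSingletonClass α]
  [MeasurableSpace Ω] {μ : Measure Ω} {A : Ω → α}

theorem integral_eq_sum_setIntegral_fiber {E : Type*} [NormedAddCommGroup E] [NormedSpace ℝ E]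
    (hA : Measurable A) {F : Ω → E} (hF : ∀ a, IntegrableOn F {ω | A ω = a} μ) :
    ∫ ω, F ω ∂μ = ∑ a, ∫ ω in {ω | A ω = a}, F ω ∂μ := by
  have hunion : (⋃ a, {ω | A ω = a}) = Set.univ := by
    ext ω
    simp
  have h := integral_iUnion_fintype (s := fun a => {ω | A ω = a})
    (fun a => hA (measurableSet_singleton a)) (pairwise_disjoint_fiber A) hF
  rwa [hunion, Measure.restrict_univ] at h

theorem integral_comp_mul_sub_comp [IsFiniteMeasure μ] (hA : Measurable A) {Y : Ω → ℝ}
    (hY : Integrable Y μ) (w m : α → ℝ) :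
    ∫ ω, w (A ω) * (Y ω - m (A ω)) ∂μ
      = ∑ a, w a * (∫ ω in {ω | A ω = a}, Y ω ∂μ - μ.real {ω | A ω = a} * m a) := by
  have hmeas : ∀ a, MeasurableSet {ω | A ω = a} := fun a => hA (measurableSet_singleton a)
  have hfiber : ∀ a, Set.EqOn (fun ω => w (A ω) * (Y ω - m (A ω)))
      (fun ω => w a * (Y ω - m a)) {ω | A ω = a} := by
    intro a ω (hω : A ω = a)
    simp only [hω]
  have hint : ∀ a, IntegrableOn (fun ω => w a * (Y ω - m a)) {ω | A ω = a} μ := fun a =>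
    (hY.integrableOn.sub (integrableOn_const (measure_ne_top μ _))).const_mul (w a)
  rw [integral_eq_sum_setIntegral_fiber hA fun a =>
    (hint a).congr_fun (hfiber a).symm (hmeas a)]
  refine Finset.sum_congr rfl fun a _ => ?_
  rw [setIntegral_congr_fun (hmeas a) (hfiber a), integral_const_mul,
    integral_sub hY.integrableOn (integrableOn_const (measure_ne_top μ _)), setIntegral_const,
    smul_eq_mul]

end FiniteTreatment

/-- Theorem 1: first-order expansion of the context-specific parameter
`Ψ_c(Q̄) = ∑_a g*(a∣c) Q̄(a,c)` with the doubly robust second-order remainder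
`R(Q̄,Q̄₀,g,g₀) = ∑_a g*(a∣c)(1 - g₀(a∣c)/g(a∣c))(Q̄ - Q̄₀)(a,c)`, where the expectation is
over `A ~ g₀(⋅∣c)` and `Y` with conditional mean `Q̄₀(A,c)`. -/
theorem stmt_3 {C : Type*} {Ω : Type*} [MeasurableSpace Ω]
    (μ : Measure Ω) [IsProbabilityMeasure μ]
    (Qbar Qbar0 : Bool → C → ℝ) (g g0 gstar : Bool → C → ℝ)
    (δ : ℝ) (hδ : 0 < δ) (hg : ∀ a x, δ ≤ g a x)
    (c : C) (A : Ω → Bool) (Y : Ω → ℝ)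
    (hA : Measurable A) (hY : Integrable Y μ)
    (hmarg : ∀ a, (μ {ω | A ω = a}).toReal = g0 a c)
    (hcond : ∀ a : Bool, ∫ ω in {ω | A ω = a}, Y ω ∂μ = g0 a c * Qbar0 a c) :
    ((∑ a : Bool, gstar a c * Qbar a c) - (∑ a : Bool, gstar a c * Qbar0 a c)
      = -(∫ ω, gstar (A ω) c / g (A ω) c * (Y ω - Qbar (A ω) c) ∂μ)
        + ∑ a : Bool, gstar a c * (1 - g0 a c / g a c) * (Qbar a c - Qbar0 a c)) ∧
    ((Qbar = Qbar0 ∨ g = g0) →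
      (∑ a : Bool, gstar a c * (1 - g0 a c / g a c) * (Qbar a c - Qbar0 a c)) = 0) := by
  have hweighted : ∫ ω, gstar (A ω) c / g (A ω) c * (Y ω - Qbar (A ω) c) ∂μ
      = ∑ a, gstar a c / g a c * (g0 a c * Qbar0 a c - g0 a c * Qbar a c) := by
    refine (integral_comp_mul_sub_comp hA hY (fun a => gstar a c / g a c) (Qbar · c)).trans ?_
    simp only [hcond, measureReal_def, hmarg]
  refine ⟨?_, ?_⟩
  · rw [hweighted, ← Finset.sum_sub_distrib, ← Finset.sum_neg_distrib, ← Finset.sum_add_distrib]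
    exact Finset.sum_congr rfl fun a _ => by ring
  · rintro (rfl | rfl)
    · simp only [sub_self, mul_zero, Finset.sum_const_zero]
    · have hg0 : ∀ a, g a c ≠ 0 := fun a => (hδ.trans_le (hg a c)).ne'
      simp only [div_self (hg0 _), sub_self, mul_zero, zero_mul, Finset.sum_const_zero]
end

section
/- With $\Lambda_t, \Upsilon_t$ defined from a bracket $(\lambda, \upsilon)$ as in the previous statement, with $g_{0,t} \ge \delta$, $g^* \le 1$: (i) $|\Upsilon_t - \Lambda_t| \le 2\delta^{-1}$ pointwise, and (ii) $\frac{1}{N}\sum_{t=1}^N E[(\Upsilon_t - \Lambda_t)^2 \mid \bar{O}(t-1)] \le 4\delta^{-1}\|\upsilon - \lambda\|^2_{2, P_{g^*, h_N}}$, where $\|f\|^2_{2, P_{g^*, h_N}} = \frac{1}{N}\sum_{t=1}^N \sum_{a} g^*(a \mid C_o(t)) f(a, C_o(t))^2$. In particular, an $\epsilon$-bracketing of $\bar{\mathcal{Q}}$ in $L_2(P_{g^*, h_N})$ yields a $(2\delta^{-1/2}\epsilon, 2\delta^{-1}, \bar{O}(N))$ sequential bracketing of the process $\Xi_N$, hence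 $\mathcal{N}_{[\,]}(2\delta^{-1/2}\epsilon, 2\delta^{-1}, \Xi_N, \bar{O}(N)) \le N_{[\,]}(\epsilon, \bar{\mathcal{Q}}, L_2(P_{g^*, h_N}))$. -/
/-- The gap `Υ_t - Λ_t` of the sequential bracket constructed from an outcome-model bracket
`(λ, υ)`, evaluated at treatment `a` and the realized context `Ctx t`:
`(g*/g_{0,t})(υ - λ)(a, C_o(t)) + ∑_{a'} g*(a'∣C_o(t)) (υ - λ)(a', C_o(t))`. -/
noncomputable def bracketGap {C : Type*} (Ctx : ℕ → C) (lam ups : Bool → C → ℝ)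
    (gstar : Bool → C → ℝ) (g0 : ℕ → Bool → C → ℝ) (t : ℕ) (a : Bool) : ℝ :=
  gstar a (Ctx t) / g0 t a (Ctx t) * (ups a (Ctx t) - lam a (Ctx t))
    + ∑ a' : Bool, gstar a' (Ctx t) * (ups a' (Ctx t) - lam a' (Ctx t))

/-!
Fix a context and write `q a = (g*/g₀)(υ - λ)(a)` and `S = ∑ g* (υ - λ)`, so that the bracket gap
is `q a + S`. Since `g₀ ≥ δ` and `g* ≤ 1`, the ratio `g*/g₀` is at most `δ⁻¹`; as `0 ≤ υ - λ ≤ 1`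
this gives `0 ≤ q a ≤ δ⁻¹` and `0 ≤ S ≤ 1 ≤ δ⁻¹`, hence (i). For (ii), `(q + S)² ≤ 2q² + 2S²`,
`g₀ q² = (g*/g₀) g* (υ - λ)² ≤ δ⁻¹ g* (υ - λ)²`, and Jensen for the probability vector `g*` gives
`S² ≤ ∑ g* (υ - λ)²`; averaging over `t` gives (ii), and (iii) is (ii) with `δ⁻¹ = (δ^{-1/2})²`.
-/

open Finset

lemma div_le_inv_of_le_one_of_le {x y δ : ℝ} (hδ : 0 < δ) (hx : x ≤ 1) (hy : δ ≤ y) :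
    x / y ≤ δ⁻¹ := by
  simpa only [one_div] using div_le_div₀ zero_le_one hx hδ hy

section SingleContext

variable {α : Type*} [Fintype α] {g p d : α → ℝ} {δ : ℝ}

lemma le_one_of_forall_le_of_sum_eq_one (hδ : 0 < δ) (hp : ∀ a, δ ≤ p a)
    (hpsum : ∑ a, p a = 1) : δ ≤ 1 := by
  obtain ⟨a, -, -⟩ := exists_ne_zero_of_sum_ne_zero (hpsum ▸ one_ne_zero : ∑ a, p a ≠ 0)
  calc δ ≤ p a := hp a
    _ ≤ ∑ b, p b := single_le_sum (fun b _ => hδ.le.trans (hp b)) (mem_univ a)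
    _ = 1 := hpsum

lemma sq_sum_mul_le_sum_mul_sq (hg0 : ∀ a, 0 ≤ g a) (hgsum : ∑ a, g a = 1) :
    (∑ a, g a * d a) ^ 2 ≤ ∑ a, g a * d a ^ 2 := by
  have := sum_sq_le_sum_mul_sum_of_sq_le_mul univ (r := fun a => g a * d a)
    (fun a _ => hg0 a) (fun a _ => mul_nonneg (hg0 a) (sq_nonneg (d a)))
    (fun a _ => (by ring : (g a * d a) ^ 2 = g a * (g a * d a ^ 2)).le)
  rwa [hgsum, one_mul] at this

lemma abs_div_mul_add_sum_mul_le (hδ : 0 < δ) (hg0 : ∀ a, 0 ≤ g a) (hg1 : ∀ a, g a ≤ 1)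
    (hgsum : ∑ a, g a = 1) (hp : ∀ a, δ ≤ p a) (hpsum : ∑ a, p a = 1)
    (hd0 : ∀ a, 0 ≤ d a) (hd1 : ∀ a, d a ≤ 1) (a : α) :
    |g a / p a * d a + ∑ b, g b * d b| ≤ 2 * δ⁻¹ := by
  have hratio0 : 0 ≤ g a / p a := div_nonneg (hg0 a) (hδ.trans_le (hp a)).le
  have hq : g a / p a * d a ≤ δ⁻¹ :=
    calc g a / p a * d a ≤ g a / p a * 1 := mul_le_mul_of_nonneg_left (hd1 a) hratio0
      _ ≤ δ⁻¹ := by rw [mul_one]; exact div_le_inv_of_le_one_of_le hδ (hg1 a) (hp a)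
  have hS : ∑ b, g b * d b ≤ δ⁻¹ :=
    calc ∑ b, g b * d b ≤ ∑ b, g b :=
          sum_le_sum fun b _ => mul_le_of_le_one_right (hg0 b) (hd1 b)
      _ = 1 := hgsum
      _ ≤ δ⁻¹ := one_le_inv₀ hδ |>.mpr (le_one_of_forall_le_of_sum_eq_one hδ hp hpsum)
  have hnonneg : 0 ≤ g a / p a * d a + ∑ b, g b * d b :=
    add_nonneg (mul_nonneg hratio0 (hd0 a)) (sum_nonneg fun b _ => mul_nonneg (hg0 b) (hd0 b))
  rw [abs_of_nonneg hnonneg]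
  linarith

lemma sum_mul_div_mul_add_sum_mul_sq_le (hδ : 0 < δ) (hg0 : ∀ a, 0 ≤ g a)
    (hg1 : ∀ a, g a ≤ 1) (hgsum : ∑ a, g a = 1) (hp : ∀ a, δ ≤ p a) (hpsum : ∑ a, p a = 1) :
    ∑ a, p a * (g a / p a * d a + ∑ b, g b * d b) ^ 2 ≤ 4 * δ⁻¹ * ∑ a, g a * d a ^ 2 := by
  set S := ∑ b, g b * d b
  set T := ∑ a, g a * d a ^ 2
  have hp0 : ∀ a, 0 < p a := fun a => hδ.trans_le (hp a)
  have hT : 0 ≤ T := sum_nonneg fun a _ => mul_nonneg (hg0 a) (sq_nonneg (d a))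
  have hδinv : 1 ≤ δ⁻¹ := one_le_inv₀ hδ |>.mpr
    (le_one_of_forall_le_of_sum_eq_one hδ hp hpsum)
  have hterm : ∀ a, p a * (g a / p a * d a) ^ 2 ≤ δ⁻¹ * (g a * d a ^ 2) := fun a => by
    calc p a * (g a / p a * d a) ^ 2 = g a / p a * (g a * d a ^ 2) := by
          field_simp [(hp0 a).ne']
      _ ≤ δ⁻¹ * (g a * d a ^ 2) := mul_le_mul_of_nonneg_right
          (div_le_inv_of_le_one_of_le hδ (hg1 a) (hp a))
          (mul_nonneg (hg0 a) (sq_nonneg (d a)))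
  calc ∑ a, p a * (g a / p a * d a + S) ^ 2
      ≤ ∑ a, (2 * (p a * (g a / p a * d a) ^ 2) + 2 * (p a * S ^ 2)) :=
        sum_le_sum fun a _ => (mul_le_mul_of_nonneg_left add_sq_le (hp0 a).le).trans_eq (by ring)
    _ = 2 * ∑ a, p a * (g a / p a * d a) ^ 2 + 2 * S ^ 2 := by
        rw [sum_add_distrib, ← mul_sum, ← mul_sum, ← sum_mul, hpsum, one_mul]
    _ ≤ 2 * (δ⁻¹ * T) + 2 * (δ⁻¹ * T) := by
        gcongr
        · exact (sum_le_sum fun a _ => hterm a).trans_eq (mul_sum ..).symm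
        · exact (sq_sum_mul_le_sum_mul_sq hg0 hgsum).trans (le_mul_of_one_le_left hT hδinv)
    _ = 4 * δ⁻¹ * T := by ring

end SingleContext

theorem stmt_9_general {C : Type*} (N : ℕ) (Ctx : ℕ → C)
    (lam ups : Bool → C → ℝ) (gstar : Bool → C → ℝ) (g0 : ℕ → Bool → C → ℝ)
    (δ : ℝ) (hδ : 0 < δ)
    (hg0 : ∀ t a c, δ ≤ g0 t a c)
    (hg0sum : ∀ t c, ∑ a : Bool, g0 t a c = 1)
    (hgs0 : ∀ a c, 0 ≤ gstar a c) (hgs1 : ∀ a c, gstar a c ≤ 1)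
    (hgssum : ∀ c, ∑ a : Bool, gstar a c = 1)
    (hlo : ∀ a c, 0 ≤ lam a c) (hord : ∀ a c, lam a c ≤ ups a c)
    (hhi : ∀ a c, ups a c ≤ 1) :
    (∀ t a, |bracketGap Ctx lam ups gstar g0 t a| ≤ 2 * δ⁻¹) ∧
    ((1/(N:ℝ)) * ∑ t ∈ Finset.range N,
        ∑ a : Bool, g0 t a (Ctx t) * (bracketGap Ctx lam ups gstar g0 t a)^2
      ≤ 4 * δ⁻¹ * ((1/(N:ℝ)) * ∑ t ∈ Finset.range N,
          ∑ a : Bool, gstar a (Ctx t) * (ups a (Ctx t) - lam a (Ctx t))^2)) ∧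
    (∀ ε : ℝ, 0 ≤ ε →
      (1/(N:ℝ)) * ∑ t ∈ Finset.range N,
          ∑ a : Bool, gstar a (Ctx t) * (ups a (Ctx t) - lam a (Ctx t))^2 ≤ ε^2 →
      (1/(N:ℝ)) * ∑ t ∈ Finset.range N,
          ∑ a : Bool, g0 t a (Ctx t) * (bracketGap Ctx lam ups gstar g0 t a)^2
        ≤ (2 * δ⁻¹ ^ ((1:ℝ)/2) * ε)^2) := by
  have second_moment : (1/(N:ℝ)) * ∑ t ∈ range N,
        ∑ a : Bool, g0 t a (Ctx t) * (bracketGap Ctx lam ups gstar g0 t a)^2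
      ≤ 4 * δ⁻¹ * ((1/(N:ℝ)) * ∑ t ∈ range N,
          ∑ a : Bool, gstar a (Ctx t) * (ups a (Ctx t) - lam a (Ctx t))^2) := by
    rw [mul_left_comm, mul_sum _ _ (4 * δ⁻¹)]
    gcongr with t
    exact sum_mul_div_mul_add_sum_mul_sq_le hδ (fun a => hgs0 a _) (fun a => hgs1 a _)
      (hgssum _) (fun a => hg0 t a _) (hg0sum t _)
  refine ⟨fun t a => ?_, second_moment, fun ε _ hbracket => ?_⟩
  · exact abs_div_mul_add_sum_mul_le hδ (fun a => hgs0 a _) (fun a => hgs1 a _) (hgssum _)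
      (fun a => hg0 t a _) (hg0sum t _) (fun a => sub_nonneg.mpr (hord a _))
      (fun a => by linarith [hlo a (Ctx t), hhi a (Ctx t)]) a
  · have hsqrt : (δ⁻¹ ^ ((1:ℝ)/2)) ^ 2 = δ⁻¹ := by
      rw [← Real.sqrt_eq_rpow, Real.sq_sqrt (inv_nonneg.mpr hδ.le)]
    calc _ ≤ 4 * δ⁻¹ * ε ^ 2 := second_moment.trans (by gcongr)
      _ = (2 * δ⁻¹ ^ ((1:ℝ)/2) * ε) ^ 2 := by rw [mul_pow, mul_pow, hsqrt]; ring

/-- Lemma 3, size of the sequential brackets: with `g_{0,t} ≥ δ`,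
`g* ≤ 1` conditional densities and `0 ≤ λ ≤ υ ≤ 1`:
(i) `|Υ_t - Λ_t| ≤ 2δ⁻¹` pointwise, and
(ii) the average of the conditional second moments
`(1/N)∑_t E[(Υ_t - Λ_t)² ∣ Ō(t-1)] = (1/N)∑_t ∑_a g_{0,t}(a∣C_o(t)) (Υ_t-Λ_t)²(a)`
is at most `4 δ⁻¹ ‖υ - λ‖²_{2,P_{g*,h_N}}`; hence an `ε`-bracketing of the outcome model in
`L₂(P_{g*,h_N})` yields a `(2δ^{-1/2}ε, 2δ⁻¹)` sequential bracketing of the canonical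
gradient process `Ξ_N`. -/
theorem stmt_9 {C : Type*} (N : ℕ) (hN : 0 < N) (Ctx : ℕ → C)
    (lam ups : Bool → C → ℝ) (gstar : Bool → C → ℝ) (g0 : ℕ → Bool → C → ℝ)
    (δ : ℝ) (hδ : 0 < δ)
    (hg0 : ∀ t a c, δ ≤ g0 t a c) (hg0' : ∀ t a c, g0 t a c ≤ 1)
    (hg0sum : ∀ t c, ∑ a : Bool, g0 t a c = 1)
    (hgs0 : ∀ a c, 0 ≤ gstar a c) (hgs1 : ∀ a c, gstar a c ≤ 1)
    (hgssum : ∀ c, ∑ a : Bool, gstar a c = 1)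
    (hlo : ∀ a c, 0 ≤ lam a c) (hord : ∀ a c, lam a c ≤ ups a c)
    (hhi : ∀ a c, ups a c ≤ 1) :
    (∀ t a, |bracketGap Ctx lam ups gstar g0 t a| ≤ 2 * δ⁻¹) ∧
    ((1/(N:ℝ)) * ∑ t ∈ Finset.range N,
        ∑ a : Bool, g0 t a (Ctx t) * (bracketGap Ctx lam ups gstar g0 t a)^2
      ≤ 4 * δ⁻¹ * ((1/(N:ℝ)) * ∑ t ∈ Finset.range N,
          ∑ a : Bool, gstar a (Ctx t) * (ups a (Ctx t) - lam a (Ctx t))^2)) ∧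
    (∀ ε : ℝ, 0 ≤ ε →
      (1/(N:ℝ)) * ∑ t ∈ Finset.range N,
          ∑ a : Bool, gstar a (Ctx t) * (ups a (Ctx t) - lam a (Ctx t))^2 ≤ ε^2 →
      (1/(N:ℝ)) * ∑ t ∈ Finset.range N,
          ∑ a : Bool, g0 t a (Ctx t) * (bracketGap Ctx lam ups gstar g0 t a)^2
        ≤ (2 * δ⁻¹ ^ ((1:ℝ)/2) * ε)^2) :=
  stmt_9_general N Ctx lam ups gstar g0 δ hδ hg0 hg0sum hgs0 hgs1 hgssum hlo hord hhi
end

section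
/- Let $f(g)(c) = \mathrm{Var}_{Q_0,g_0}(D^*(\bar{Q}_1, g)(C_o(t), O(t)) \mid C_o(t) = c)$, where $D^*(\bar{Q}_1,g)(c,a,y) = \frac{g^*(a\mid c)}{g(a\mid c)}(y - \bar{Q}_1(a,c)) + \sum_{a'} g^*(a'\mid c)\bar{Q}_1(a',c) - \text{const}$. Suppose $g \ge \delta$, $g_{0,t} \ge \delta$, $g^* \le 1$, and $0 \le Y, \bar{Q}_1 \le 1$. Then $\left|E_{h_{0,t}}[f(g)(C_o(t))] - E_{h_{0,t}}[f(g_{0,t})(C_o(t))]\right| \le 4\delta^{-3}\|g - g_{0,t}\|_{1, P_{g^*, h_{0,t}}}$. -/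
open MeasureTheory ProbabilityTheory

/-! For two random variables bounded by `M`, writing `Var X = E X² - (E X)²` and factoring both
differences of squares as `(x + y)(x - y)` gives `|Var X - Var Y| ≤ 4 M E|X - Y|`. Given the
context, the inverse-weighted residuals `g*(a)/g(a) (y - Q̄₁(a))` are bounded by `1/δ`, and those
for `g` and `g₀` differ by at most `∑ₐ g*(a) |g(a) - g₀(a)| / δ²`; integrating over the context
law gives the result. The centering terms of `D*` do not depend on `(a, y)`, so they drop out of
the conditional variance. -/

lemma abs_sq_sub_sq_le_of_abs_le {x y M : ℝ} (hx : |x| ≤ M) (hy : |y| ≤ M) :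
    |x ^ 2 - y ^ 2| ≤ 2 * M * |x - y| := by
  rw [sq_sub_sq, abs_mul]
  exact mul_le_mul_of_nonneg_right (by linarith [abs_add_le x y]) (abs_nonneg _)

section Variance

variable {Ω : Type*} [MeasurableSpace Ω] {μ : Measure Ω} [IsProbabilityMeasure μ]
  {X Y : Ω → ℝ} {M : ℝ}

lemma abs_integral_le_of_ae_abs_le (hX : ∀ᵐ ω ∂μ, |X ω| ≤ M) : |∫ ω, X ω ∂μ| ≤ M := by
  simpa using norm_integral_le_of_norm_le_const (μ := μ) (f := X) (C := M) (by simpa using hX)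

theorem abs_variance_sub_variance_le (hXm : AEStronglyMeasurable X μ)
    (hYm : AEStronglyMeasurable Y μ) (hX : ∀ᵐ ω ∂μ, |X ω| ≤ M) (hY : ∀ᵐ ω ∂μ, |Y ω| ≤ M) :
    |variance X μ - variance Y μ| ≤ 4 * M * ∫ ω, |X ω - Y ω| ∂μ := by
  have hX2 : MemLp X 2 μ := MemLp.of_bound hXm M (by simpa using hX)
  have hY2 : MemLp Y 2 μ := MemLp.of_bound hYm M (by simpa using hY)
  have hXY : Integrable (fun ω => X ω - Y ω) μ :=
    (hX2.integrable one_le_two).sub (hY2.integrable one_le_two)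
  have hM : 0 ≤ M := by
    obtain ⟨ω, hω⟩ := hX.exists
    exact (abs_nonneg _).trans hω
  have hsecond : |∫ ω, X ω ^ 2 ∂μ - ∫ ω, Y ω ^ 2 ∂μ| ≤ 2 * M * ∫ ω, |X ω - Y ω| ∂μ := by
    rw [← integral_sub hX2.integrable_sq hY2.integrable_sq, ← integral_const_mul]
    refine abs_integral_le_integral_abs.trans
      (integral_mono_ae (hX2.integrable_sq.sub hY2.integrable_sq).abs
        (hXY.abs.const_mul _) ?_)
    filter_upwards [hX, hY] with ω hx hy using abs_sq_sub_sq_le_of_abs_le hx hy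
  have hfirst : |(∫ ω, X ω ∂μ) ^ 2 - (∫ ω, Y ω ∂μ) ^ 2| ≤ 2 * M * ∫ ω, |X ω - Y ω| ∂μ := by
    refine (abs_sq_sub_sq_le_of_abs_le (abs_integral_le_of_ae_abs_le hX)
      (abs_integral_le_of_ae_abs_le hY)).trans ?_
    rw [← integral_sub (hX2.integrable one_le_two) (hY2.integrable one_le_two)]
    gcongr
    exact abs_integral_le_integral_abs
  rw [variance_eq_sub hX2, variance_eq_sub hY2]
  calc _ = |(∫ ω, X ω ^ 2 ∂μ - ∫ ω, Y ω ^ 2 ∂μ)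
          - ((∫ ω, X ω ∂μ) ^ 2 - (∫ ω, Y ω ∂μ) ^ 2)| := by simp only [Pi.pow_apply]; ring_nf
    _ ≤ _ := abs_sub _ _
    _ ≤ _ := add_le_add hsecond hfirst
    _ = 4 * M * ∫ ω, |X ω - Y ω| ∂μ := by ring

end Variance

lemma abs_div_mul_le_one_div {s G r δ : ℝ} (hδ : 0 < δ) (hG : δ ≤ G) (hs0 : 0 ≤ s)
    (hs1 : s ≤ 1) (hr : |r| ≤ 1) : |s / G * r| ≤ 1 / δ := by
  rw [abs_mul, abs_div, abs_of_nonneg hs0, abs_of_pos (hδ.trans_le hG)]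
  calc s / G * |r| ≤ 1 / δ * 1 :=
        mul_le_mul (div_le_div₀ zero_le_one hs1 hδ hG) hr (abs_nonneg _) (by positivity)
    _ = 1 / δ := mul_one _

lemma abs_div_mul_sub_div_mul_le {s G G' r δ : ℝ} (hδ : 0 < δ) (hG : δ ≤ G) (hG' : δ ≤ G')
    (hs0 : 0 ≤ s) (hr : |r| ≤ 1) : |s / G * r - s / G' * r| ≤ s * |G - G'| / δ ^ 2 := by
  have hGpos := hδ.trans_le hG
  have hG'pos := hδ.trans_le hG'
  have heq : s / G * r - s / G' * r = s * r * (G' - G) / (G * G') := by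
    field_simp
  rw [heq, abs_div, abs_mul, abs_mul, abs_of_nonneg hs0, abs_of_pos (mul_pos hGpos hG'pos),
    abs_sub_comm]
  calc s * |r| * |G - G'| / (G * G') ≤ s * 1 * |G - G'| / (δ * δ) := by gcongr
    _ = s * |G - G'| / δ ^ 2 := by ring

theorem abs_variance_ipw_sub_le {α : Type*} [Fintype α] [MeasurableSpace α]
    [MeasurableSingletonClass α] (ν : Measure (α × ℝ)) [IsProbabilityMeasure ν]
    (q G G' s : α → ℝ) {δ : ℝ} (hδ : 0 < δ) (hG : ∀ a, δ ≤ G a) (hG' : ∀ a, δ ≤ G' a)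
    (hs0 : ∀ a, 0 ≤ s a) (hs1 : ∀ a, s a ≤ 1) (hq : ∀ a, q a ∈ Set.Icc (0 : ℝ) 1)
    (hY : ∀ᵐ p ∂ν, p.2 ∈ Set.Icc (0 : ℝ) 1) :
    |variance (fun p : α × ℝ => s p.1 / G p.1 * (p.2 - q p.1)) ν -
      variance (fun p : α × ℝ => s p.1 / G' p.1 * (p.2 - q p.1)) ν|
      ≤ 4 / δ ^ 3 * ∑ a, s a * |G a - G' a| := by
  have hr : ∀ᵐ p ∂ν, |p.2 - q p.1| ≤ 1 := by
    filter_upwards [hY] with p ⟨hy0, hy1⟩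
    obtain ⟨hq0, hq1⟩ := hq p.1
    rw [abs_le]
    constructor <;> linarith
  have hmeas (H : α → ℝ) :
      AEStronglyMeasurable (fun p : α × ℝ => s p.1 / H p.1 * (p.2 - q p.1)) ν :=
    (((measurable_of_countable fun a => s a / H a).comp measurable_fst).mul
      (measurable_snd.sub ((measurable_of_countable q).comp measurable_fst))).aestronglyMeasurable
  have hbound (H : α → ℝ) (hH : ∀ a, δ ≤ H a) :
      ∀ᵐ p ∂ν, |s p.1 / H p.1 * (p.2 - q p.1)| ≤ 1 / δ := by
    filter_upwards [hr] with p hp using abs_div_mul_le_one_div hδ (hH _) (hs0 _) (hs1 _) hp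
  have hdiff : ∫ p, |s p.1 / G p.1 * (p.2 - q p.1) - s p.1 / G' p.1 * (p.2 - q p.1)| ∂ν
      ≤ (∑ a, s a * |G a - G' a|) / δ ^ 2 := by
    refine (integral_mono_of_nonneg (ae_of_all _ fun _ => abs_nonneg _)
      (integrable_const ((∑ a, s a * |G a - G' a|) / δ ^ 2)) ?_).trans_eq (by simp)
    filter_upwards [hr] with p hp
    refine (abs_div_mul_sub_div_mul_le hδ (hG _) (hG' _) (hs0 _) hp).trans ?_
    gcongr
    exact Finset.single_le_sum (f := fun a => s a * |G a - G' a|)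
      (fun a _ => mul_nonneg (hs0 a) (abs_nonneg _)) (Finset.mem_univ p.1)
  calc _ ≤ 4 * (1 / δ) * _ := abs_variance_sub_variance_le (hmeas G) (hmeas G')
        (hbound G hG) (hbound G' hG')
    _ ≤ 4 * (1 / δ) * ((∑ a, s a * |G a - G' a|) / δ ^ 2) := by gcongr
    _ = 4 / δ ^ 3 * ∑ a, s a * |G a - G' a| := by field_simp

theorem stmt_10_general {Cc : Type*} [MeasurableSpace Cc]
    (h : Measure Cc) [IsProbabilityMeasure h]
    (ν : Cc → Measure (Bool × ℝ)) (hprob : ∀ c, IsProbabilityMeasure (ν c))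
    (Q1 : Bool → Cc → ℝ) (g g0t gstar : Bool → Cc → ℝ) (δ : ℝ) (hδ : 0 < δ)
    (hg : ∀ a c, δ ≤ g a c) (hg0 : ∀ a c, δ ≤ g0t a c)
    (hgs0 : ∀ a c, 0 ≤ gstar a c) (hgs1 : ∀ a c, gstar a c ≤ 1)
    (hQ1 : ∀ a c, Q1 a c ∈ Set.Icc (0:ℝ) 1)
    (hY : ∀ c, ∀ᵐ p ∂(ν c), p.2 ∈ Set.Icc (0:ℝ) 1)
    (f : (Bool → Cc → ℝ) → Cc → ℝ)
    (hf : ∀ G c, f G c =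
      variance (fun p : Bool × ℝ => gstar p.1 c / G p.1 c * (p.2 - Q1 p.1 c)) (ν c))
    (hint1 : Integrable (f g) h) (hint2 : Integrable (f g0t) h)
    (hint3 : Integrable (fun c => ∑ a : Bool, gstar a c * |g a c - g0t a c|) h) :
    |(∫ c, f g c ∂h) - ∫ c, f g0t c ∂h|
      ≤ 4 / δ^3 * ∫ c, ∑ a : Bool, gstar a c * |g a c - g0t a c| ∂h := by
  have hpointwise (c : Cc) :
      |f g c - f g0t c| ≤ 4 / δ ^ 3 * ∑ a : Bool, gstar a c * |g a c - g0t a c| := by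
    have := hprob c
    rw [hf g c, hf g0t c]
    exact abs_variance_ipw_sub_le (ν c) (Q1 · c) (g · c) (g0t · c) (gstar · c) hδ (hg · c)
      (hg0 · c) (hgs0 · c) (hgs1 · c) (hQ1 · c) (hY c)
  calc |(∫ c, f g c ∂h) - ∫ c, f g0t c ∂h| = |∫ c, (f g c - f g0t c) ∂h| := by
        rw [integral_sub hint1 hint2]
    _ ≤ ∫ c, |f g c - f g0t c| ∂h := abs_integral_le_integral_abs
    _ ≤ ∫ c, 4 / δ ^ 3 * ∑ a : Bool, gstar a c * |g a c - g0t a c| ∂h :=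
        integral_mono_of_nonneg (ae_of_all _ fun _ => abs_nonneg _) (hint3.const_mul _)
          (ae_of_all _ hpointwise)
    _ = _ := integral_const_mul _ _

/-- Lemma 4: the map from the design `g` to the mean (over the context law
`h_{0,t}`) of the conditional variance of the canonical gradient `D*(Q̄₁, g)` is Lipschitz
in `L₁(P_{g*,h_{0,t}})` distance on designs, with constant `4δ⁻³`. Here `ν c` is the
conditional law of `(A(t), Y(t))` given context `c` (with treatment marginal `g_{0,t}(⋅∣c)`
and outcome in `[0,1]`), and the centering constants drop from the variance. -/
theorem stmt_10 {Cc : Type*} [MeasurableSpace Cc]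
    (h : Measure Cc) [IsProbabilityMeasure h]
    (ν : Cc → Measure (Bool × ℝ)) (hprob : ∀ c, IsProbabilityMeasure (ν c))
    (Q1 : Bool → Cc → ℝ) (g g0t gstar : Bool → Cc → ℝ) (δ : ℝ) (hδ : 0 < δ)
    (hg : ∀ a c, δ ≤ g a c) (hg0 : ∀ a c, δ ≤ g0t a c)
    (hgs0 : ∀ a c, 0 ≤ gstar a c) (hgs1 : ∀ a c, gstar a c ≤ 1)
    (hQ1 : ∀ a c, Q1 a c ∈ Set.Icc (0:ℝ) 1)
    (hY : ∀ c, ∀ᵐ p ∂(ν c), p.2 ∈ Set.Icc (0:ℝ) 1)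
    (hmarg : ∀ c a, ((ν c) {p | p.1 = a}).toReal = g0t a c)
    (f : (Bool → Cc → ℝ) → Cc → ℝ)
    (hf : ∀ G c, f G c =
      variance (fun p : Bool × ℝ => gstar p.1 c / G p.1 c * (p.2 - Q1 p.1 c)) (ν c))
    (hint1 : Integrable (f g) h) (hint2 : Integrable (f g0t) h)
    (hint3 : Integrable (fun c => ∑ a : Bool, gstar a c * |g a c - g0t a c|) h) :
    |(∫ c, f g c ∂h) - ∫ c, f g0t c ∂h|
      ≤ 4 / δ^3 * ∫ c, ∑ a : Bool, gstar a c * |g a c - g0t a c| ∂h :=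
  stmt_10_general h ν hprob Q1 g g0t gstar δ hδ hg hg0 hgs0 hgs1 hQ1 hY f hf hint1 hint2 hint3
end
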